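/- Let Ω_n = π^(n/2)/Γ(n/2 + 1) be the volume of the unit ball in ℝⁿ. Then Ω_n^(1/(n log n)) is strictly decreasing for n ≥ 2 and converges to e^(-1/2) as n → ∞. -/

import Mathlib

open Real Set

/-- The volume of the unit ball in ℝⁿ. -/
noncomputable def unitBallVolume (n : ℕ) : ℝ := π ^ ((n : ℝ) / 2) / Real.Gamma ((n : ℝ) / 2 + 1)

/-!
Write `log Ω_n = -(n/2) log n + a_n` with `a_n = c n - E(n/2)`, where `c = (1 + log 2π)/2` and
`E(x) = log Γ(x+1) - (x log x - x)` is the Stirling remainder. Midpoint log-convexity of `Γ` makes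
`E` nondecreasing along half-steps, so `a_{n+1} ≤ a_n + c`; combined with Legendre's duplication
formula and Stirling's bounds for `n!` it also gives `0 ≤ E(n/2) ≤ (log n)/2 + 1`, whence
`c · n log n ≤ a_n (log n + 1)` because `n = exp (log n)`. The exponent is
`log Ω_n / (n log n) = a_n / (n log n) - 1/2`. Since `n log n` grows by more than `log n + 1` at
each step, a mediant argument makes `a_n / (n log n)` strictly decreasing, and `0 ≤ a_n ≤ c n`
sends it to `0`.
-/

open Filter Topology
open scoped Nat

namespace Real

lemma log_Gamma_add_one {s : ℝ} (hs : 0 < s) : log (Gamma (s + 1)) = log (Gamma s) + log s := by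
  rw [Gamma_add_one hs.ne', log_mul hs.ne' (Gamma_pos_of_pos hs).ne', add_comm]

lemma log_Gamma_add_half_le {s : ℝ} (hs : 0 < s) :
    log (Gamma (s + 1 / 2)) ≤ log (Gamma s) + log s / 2 := by
  have hmid := convexOn_log_Gamma.2 (mem_Ioi.2 hs) (mem_Ioi.2 (by linarith : 0 < s + 1))
    (by norm_num : (0 : ℝ) ≤ 1 / 2) (by norm_num : (0 : ℝ) ≤ 1 / 2) (by norm_num)
  simp only [smul_eq_mul, Function.comp_apply, log_Gamma_add_one hs,
    show 1 / 2 * s + 1 / 2 * (s + 1) = s + 1 / 2 by ring] at hmid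
  linarith

lemma log_Gamma_add_half_add_le {s : ℝ} (hs : 0 < s) :
    log (Gamma (s + 1 / 2)) + log s / 2 ≤ log (Gamma (s + 1)) := by
  linarith [log_Gamma_add_half_le hs, log_Gamma_add_one hs]

lemma log_pi_lt_two : log π < 2 := by
  calc log π < log 4 := log_lt_log pi_pos pi_lt_four
    _ = 2 * log 2 := by rw [show (4 : ℝ) = 2 ^ 2 by norm_num, log_pow]; norm_num
    _ < 2 := by linarith [log_two_lt_d9]

end Real

lemma Stirling.log_factorial_le_stirling {n : ℕ} (hn : n ≠ 0) :
    log n ! ≤ n * log n - n + log n / 2 + 1 := by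
  obtain ⟨m, rfl⟩ := Nat.exists_eq_succ_of_ne_zero hn
  have hanti : log (stirlingSeq (m + 1)) ≤ log (stirlingSeq 1) :=
    log_stirlingSeq'_antitone (Nat.zero_le m)
  have hm : ((m + 1 : ℕ) : ℝ) ≠ 0 := by positivity
  rw [log_stirlingSeq_formula, stirlingSeq_one, log_div (exp_pos 1).ne' (by positivity), log_exp,
    log_sqrt zero_le_two, log_mul two_ne_zero hm, log_div hm (exp_pos 1).ne', log_exp] at hanti
  linarith

noncomputable def stirlingRemainder (x : ℝ) : ℝ := log (Gamma (x + 1)) - (x * log x - x)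

lemma stirlingRemainder_le_add_half {x : ℝ} (hx : 0 < x) :
    stirlingRemainder x ≤ stirlingRemainder (x + 1 / 2) := by
  have hΓ := log_Gamma_add_half_add_le (s := x + 1 / 2) (by positivity)
  rw [add_assoc, add_halves] at hΓ
  have hlog : x * (log (x + 1 / 2) - log x) ≤ 1 / 2 := by
    have h := log_le_sub_one_of_pos (show 0 < (x + 1 / 2) / x by positivity)
    rw [log_div (by positivity) hx.ne'] at h
    calc x * (log (x + 1 / 2) - log x) ≤ x * ((x + 1 / 2) / x - 1) := by gcongr
      _ = 1 / 2 := by field_simp; ring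
  unfold stirlingRemainder
  nlinarith

lemma two_mul_stirlingRemainder_half {n : ℕ} (hn : n ≠ 0) :
    2 * stirlingRemainder (n / 2) = log n ! - (n * log n - n) + log π / 2
      + (log (Gamma (n / 2 + 1)) - log (Gamma (n / 2 + 1 / 2))) := by
  have hdup := Gamma_mul_Gamma_add_half_of_pos (s := n / 2 + 1 / 2) (by positivity)
  rw [add_assoc, add_halves, show 2 * ((n : ℝ) / 2 + 1 / 2) = n + 1 by ring,
    show 1 - ((n : ℝ) + 1) = -n by ring, Gamma_nat_eq_factorial] at hdup
  have hlog := congrArg log hdup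
  rw [log_mul (Gamma_pos_of_pos (by positivity)).ne' (Gamma_pos_of_pos (by positivity)).ne',
    log_mul (by positivity) (by positivity), log_mul (by positivity) (by positivity),
    log_rpow two_pos, log_sqrt pi_pos.le] at hlog
  have hn' : (n : ℝ) ≠ 0 := by exact_mod_cast hn
  unfold stirlingRemainder
  rw [log_div hn' two_ne_zero]
  linarith

lemma stirlingRemainder_half_nonneg {n : ℕ} (hn : 2 ≤ n) : 0 ≤ stirlingRemainder (n / 2) := by
  have hn' : (2 : ℝ) ≤ n := by exact_mod_cast hn
  have hfac := Stirling.le_log_factorial_stirling (n := n) (by omega)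
  have hΓ := log_Gamma_add_half_add_le (s := n / 2) (by positivity)
  have h2 := two_mul_stirlingRemainder_half (n := n) (by omega)
  linarith [log_nonneg (show (1 : ℝ) ≤ n / 2 by linarith),
    log_nonneg (show (1 : ℝ) ≤ 2 * π by linarith [pi_gt_three]),
    log_nonneg (show (1 : ℝ) ≤ π by linarith [pi_gt_three]), log_natCast_nonneg n]

lemma stirlingRemainder_half_le {n : ℕ} (hn : n ≠ 0) :
    stirlingRemainder (n / 2) ≤ log n / 2 + 1 := by
  have hn' : (1 : ℝ) ≤ n := by exact_mod_cast Nat.one_le_iff_ne_zero.2 hn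
  have hfac := Stirling.log_factorial_le_stirling hn
  have hΓ := log_Gamma_add_half_le (s := n / 2 + 1 / 2) (by positivity)
  rw [add_assoc, add_halves] at hΓ
  have h2 := two_mul_stirlingRemainder_half hn
  have hlog : log ((n : ℝ) / 2 + 1 / 2) ≤ log n := log_le_log (by positivity) (by linarith)
  linarith [log_pi_lt_two]

lemma div_lt_div_of_le_add_of_add_lt {a a' c d d' l : ℝ} (hc : 0 < c) (hd : 0 < d) (hl : 0 < l)
    (ha' : a' ≤ a + c) (hca : c * d ≤ a * l) (hd' : d + l < d') : a' / d' < a / d := by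
  have ha : 0 < a := pos_of_mul_pos_left ((mul_pos hc hd).trans_le hca) hl.le
  rw [div_lt_div_iff₀ (by linarith) hd]
  nlinarith [mul_le_mul_of_nonneg_right ha' hd.le, mul_lt_mul_of_pos_left hd' ha]

lemma mul_log_add_log_add_one_lt {x : ℝ} (hx : 0 < x) :
    x * log x + (log x + 1) < (x + 1) * log (x + 1) := by
  have h := log_lt_sub_one_of_pos (show 0 < x / (x + 1) by positivity)
    (by rw [ne_eq, div_eq_one_iff_eq (by positivity)]; linarith)
  rw [log_div hx.ne' (by positivity), show x / (x + 1) - 1 = -(1 / (x + 1)) by field_simp; ring]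
    at h
  have h' : 1 < (x + 1) * (log (x + 1) - log x) := by
    rw [← div_lt_iff₀' (by positivity)]; linarith
  linarith

lemma five_div_four_le_one_add_log_two_mul_pi_div_two : 5 / 4 ≤ (1 + log (2 * π)) / 2 := by
  have : 1 ≤ log π := by
    rw [le_log_iff_exp_le pi_pos]; linarith [exp_one_lt_d9, pi_gt_three]
  rw [log_mul two_ne_zero pi_ne_zero]; linarith [log_two_gt_d9]

noncomputable def unitBallLogExcess (n : ℕ) : ℝ :=
  n * ((1 + log (2 * π)) / 2) - stirlingRemainder (n / 2)

lemma unitBallVolume_pos (n : ℕ) : 0 < unitBallVolume n :=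
  div_pos (rpow_pos_of_pos pi_pos _) (Gamma_pos_of_pos (by positivity))

lemma log_unitBallVolume (n : ℕ) :
    log (unitBallVolume n) = unitBallLogExcess n - n / 2 * log n := by
  rcases eq_or_ne n 0 with rfl | hn
  · simp [unitBallVolume, unitBallLogExcess, stirlingRemainder]
  have hn' : (n : ℝ) ≠ 0 := by exact_mod_cast hn
  rw [unitBallVolume, log_div (rpow_pos_of_pos pi_pos _).ne' (Gamma_pos_of_pos (by positivity)).ne',
    log_rpow pi_pos, unitBallLogExcess, stirlingRemainder, log_div hn' two_ne_zero,
    log_mul two_ne_zero pi_ne_zero]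
  ring

lemma unitBallLogExcess_succ_le {n : ℕ} (hn : n ≠ 0) :
    unitBallLogExcess (n + 1) ≤ unitBallLogExcess n + (1 + log (2 * π)) / 2 := by
  have hE := stirlingRemainder_le_add_half (x := n / 2) (by positivity)
  have hcast : ((n + 1 : ℕ) : ℝ) / 2 = n / 2 + 1 / 2 := by push_cast; ring
  rw [unitBallLogExcess, unitBallLogExcess, hcast]
  push_cast
  linarith

lemma mul_le_unitBallLogExcess_mul {n : ℕ} (hn : n ≠ 0) :
    (1 + log (2 * π)) / 2 * (n * log n) ≤ unitBallLogExcess n * (log n + 1) := by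
  set L := log n
  have hL : 0 ≤ L := log_natCast_nonneg n
  have hexp : 1 + L + L ^ 2 / 2 ≤ n := by
    simpa [L, exp_log (show (0 : ℝ) < n by positivity)] using quadratic_le_exp_of_nonneg hL
  have hc := five_div_four_le_one_add_log_two_mul_pi_div_two
  have hE : stirlingRemainder (n / 2) * (L + 1) ≤ n * ((1 + log (2 * π)) / 2) :=
    calc stirlingRemainder (n / 2) * (L + 1) ≤ (L / 2 + 1) * (L + 1) := by
          gcongr; exact stirlingRemainder_half_le hn
      _ ≤ 5 / 4 * (1 + L + L ^ 2 / 2) := by nlinarith [sq_nonneg (L - 1)]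
      _ ≤ (1 + log (2 * π)) / 2 * n := by gcongr
      _ = n * ((1 + log (2 * π)) / 2) := mul_comm _ _
  rw [unitBallLogExcess]
  linarith

lemma unitBallLogExcess_pos {n : ℕ} (hn : 2 ≤ n) : 0 < unitBallLogExcess n := by
  have hn' : (2 : ℝ) ≤ n := by exact_mod_cast hn
  have hL : 0 < log n := log_pos (by linarith)
  have hc := five_div_four_le_one_add_log_two_mul_pi_div_two
  have hmul := mul_le_unitBallLogExcess_mul (n := n) (by omega)
  have hlhs : 0 < (1 + log (2 * π)) / 2 * (n * log n) := mul_pos (by linarith) (by positivity)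
  exact pos_of_mul_pos_left (hlhs.trans_le hmul) (by linarith)

lemma unitBallLogExcess_le {n : ℕ} (hn : 2 ≤ n) :
    unitBallLogExcess n ≤ n * ((1 + log (2 * π)) / 2) := by
  have hE := stirlingRemainder_half_nonneg hn
  rw [unitBallLogExcess]
  linarith

lemma unitBallLogExcess_div_strictAntiOn :
    StrictAntiOn (fun n : ℕ => unitBallLogExcess n / (n * log n)) {n | 2 ≤ n} := by
  refine strictAntiOn_of_add_one_lt ordConnected_Ici fun n _ (hn : 2 ≤ n) _ => ?_
  have hn' : (2 : ℝ) ≤ n := by exact_mod_cast hn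
  have hL : 0 < log n := log_pos (by linarith)
  refine div_lt_div_of_le_add_of_add_lt
    (by linarith [five_div_four_le_one_add_log_two_mul_pi_div_two]) (by positivity) (by linarith)
    (unitBallLogExcess_succ_le (by omega)) (mul_le_unitBallLogExcess_mul (by omega)) ?_
  simpa using mul_log_add_log_add_one_lt (x := n) (by positivity)

lemma tendsto_unitBallLogExcess_div :
    Tendsto (fun n : ℕ => unitBallLogExcess n / (n * log n)) atTop (𝓝 0) := by
  have hlog : Tendsto (fun n : ℕ => log n) atTop atTop :=
    tendsto_log_atTop.comp tendsto_natCast_atTop_atTop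
  refine tendsto_of_tendsto_of_tendsto_of_le_of_le' tendsto_const_nhds
    (tendsto_const_nhds.div_atTop hlog (a := (1 + log (2 * π)) / 2)) ?_ ?_ <;>
    filter_upwards [eventually_ge_atTop 2] with n (hn : 2 ≤ n)
  all_goals have hn' : (2 : ℝ) ≤ n := by exact_mod_cast hn
  all_goals have hL : 0 < log n := log_pos (by linarith)
  · exact (div_pos (unitBallLogExcess_pos hn) (by positivity)).le
  · calc unitBallLogExcess n / (n * log n) ≤ n * ((1 + log (2 * π)) / 2) / (n * log n) := by
          gcongr; exact unitBallLogExcess_le hn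
      _ = (1 + log (2 * π)) / 2 / log n := by field_simp

lemma unitBallVolume_rpow_eq {n : ℕ} (hn : 2 ≤ n) :
    unitBallVolume n ^ (1 / (n * log n)) = exp (unitBallLogExcess n / (n * log n) - 1 / 2) := by
  have hn' : (2 : ℝ) ≤ n := by exact_mod_cast hn
  have hL : 0 < log n := log_pos (by linarith)
  rw [rpow_def_of_pos (unitBallVolume_pos n), log_unitBallVolume]
  congr 1
  field_simp

theorem unitBallVolume_rpow_strictAnti_tendsto :
    StrictAntiOn (fun n : ℕ => unitBallVolume n ^ (1 / ((n : ℝ) * Real.log n)))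
      {n : ℕ | 2 ≤ n} ∧
    Filter.Tendsto (fun n : ℕ => unitBallVolume n ^ (1 / ((n : ℝ) * Real.log n)))
      Filter.atTop (nhds (Real.exp (-1 / 2))) := by
  refine ⟨fun a (ha : 2 ≤ a) b (hb : 2 ≤ b) hab => ?_, ?_⟩
  · simp only [unitBallVolume_rpow_eq ha, unitBallVolume_rpow_eq hb, exp_lt_exp,
      sub_lt_sub_iff_right]
    exact unitBallLogExcess_div_strictAntiOn ha hb hab
  · have hlim := (tendsto_unitBallLogExcess_div.sub_const (1 / 2)).rexp
    rw [zero_sub, ← neg_div] at hlim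
    refine hlim.congr' ?_
    filter_upwards [eventually_ge_atTop 2] with n hn
    exact (unitBallVolume_rpow_eq hn).symm
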